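/- arXiv:2304.07416 — 2 statements merged into one kernel-verified Lean document; each statement's English description precedes it below -/
import Mathlib

section
/- A pairwise disjoint sequence in a Banach lattice is absolutely weakly null if and only if it is weakly null. -/
set_option linter.unusedSectionVars false

open Filter Topology Pointwise MeasureTheory


section Defs

variable {E : Type*} [NormedAddCommGroup E] [Lattice E] [HasSolidNorm E] [IsOrderedAddMonoid E] [NormedSpace ℝ E]

/-- The pseudometric on a Banach lattice induced by a positive continuous linear functional `f`,
given by `dist x y = f |x - y|`. -/
noncomputable def absSeminormDist (f : E →L[ℝ] ℝ) (hf : ∀ x : E, 0 ≤ x → 0 ≤ f x) :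
    PseudoMetricSpace E where
  dist x y := f |x - y|
  dist_self x := by simp
  dist_comm x y := by simp [abs_sub_comm]
  dist_triangle x y z := by
    have h1 : |x - z| ≤ |x - y| + |y - z| := by
      calc |x - z| = |(x - y) + (y - z)| := by abel_nf
      _ ≤ |x - y| + |y - z| := abs_add_le _ _
    have h2 := hf (|x - y| + |y - z| - |x - z|) (sub_nonneg.mpr h1)
    simp only [map_sub, map_add] at h2
    show f |x - z| ≤ f |x - y| + f |y - z|
    linarith

/-- The absolute weak topology `|σ|(E, E*)` on a Banach lattice `E`: the topology generated by
the lattice seminorms `x ↦ |x*|(|x|) = x*(|x|)`, for `x*` ranging over the positive continuous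
linear functionals on `E`. -/
noncomputable def absWeakTopology (E : Type*) [NormedAddCommGroup E] [Lattice E] [HasSolidNorm E] [IsOrderedAddMonoid E] [NormedSpace ℝ E] :
    TopologicalSpace E :=
  ⨅ f : {f : E →L[ℝ] ℝ // ∀ x : E, 0 ≤ x → 0 ≤ f x},
    (absSeminormDist f.1 f.2).toUniformSpace.toTopologicalSpace

end Defs

/-!
For a functional `f` and a solid additive submonoid `D`, the map `z ↦ sup f (D ∩ [0, z])` is
additive on the positive cone by the Riesz decomposition property, so it extends to a continuous
linear functional. With `D = E` this is a positive functional dominating `f` on the cone; since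
positive functionals satisfy `|φ x| ≤ φ |x|`, absolutely weakly null sequences are weakly null.

Conversely, let `f` be positive and take for `D` the disjoint complement of the negative parts
`(x m)⁻`: the resulting functional agrees with `f` on each `(x n)⁺` and vanishes on each `(x n)⁻`.
Together with the same construction for `-x` this yields `F` with `F (x n) = f |x n|`, so
`f |x n| → 0` whenever `x` is weakly null.
-/

open LatticeOrderedAddCommGroup

section LatticeGroup

variable {α : Type*} [Lattice α] [AddCommGroup α] [IsOrderedAddMonoid α]

lemma add_inf_eq_zero {x y c : α} (hx : 0 ≤ x) (hy : 0 ≤ y) (hxc : x ⊓ c = 0)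
    (hyc : y ⊓ c = 0) : (x + y) ⊓ c = 0 := by
  have hc : 0 ≤ c := hxc ▸ inf_le_right
  refine le_antisymm ?_ (le_inf (add_nonneg hx hy) hc)
  calc (x + y) ⊓ c ≤ ((x + y) ⊓ (c + y)) ⊓ c :=
        le_inf (inf_le_inf_left _ (le_add_of_nonneg_right hy)) inf_le_right
    _ = y ⊓ c := by rw [← inf_add, hxc, zero_add]
    _ = 0 := hyc

lemma posPart_inf_negPart_eq_zero_of_abs_inf_abs {a b : α} (h : |a| ⊓ |b| = 0) :
    a⁺ ⊓ b⁻ = 0 :=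
  le_antisymm (h ▸ inf_le_inf (sup_le (le_abs_self a) (abs_nonneg a))
      (sup_le (neg_le_abs b) (abs_nonneg b)))
    (le_inf (posPart_nonneg a) (negPart_nonneg b))

def disjointComplement (s : Set α) : AddSubgroup α where
  carrier := {w | ∀ v ∈ s, |w| ⊓ |v| = 0}
  zero_mem' v _ := by simp
  add_mem' {a b} ha hb v hv :=
    le_antisymm ((inf_le_inf_right _ (abs_add_le a b)).trans
        (add_inf_eq_zero (abs_nonneg a) (abs_nonneg b) (ha v hv) (hb v hv)).le)
      (le_inf (abs_nonneg _) (abs_nonneg _))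
  neg_mem' {a} ha v hv := by simpa using ha v hv

lemma isSolid_disjointComplement (s : Set α) : IsSolid (disjointComplement s : Set α) :=
  fun _ ha _ hba v hv =>
    le_antisymm ((inf_le_inf_right _ hba).trans (ha v hv).le)
      (le_inf (abs_nonneg _) (abs_nonneg _))

lemma inter_Icc_zero_add {I : AddSubmonoid α} (hI : IsSolid (I : Set α)) {x y : α}
    (hx : 0 ≤ x) (hy : 0 ≤ y) :
    (I : Set α) ∩ Set.Icc 0 (x + y) = (I : Set α) ∩ Set.Icc 0 x + (I : Set α) ∩ Set.Icc 0 y := by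
  have hsolid : ∀ {a b : α}, a ∈ I → 0 ≤ b → b ≤ a → b ∈ I := fun ha hb hba =>
    hI ha (by rwa [abs_of_nonneg hb, abs_of_nonneg (hb.trans hba)])
  ext w
  constructor
  · rintro ⟨hwI, hw0, hwxy⟩
    refine ⟨w ⊓ x, ⟨hsolid hwI (le_inf hw0 hx) inf_le_left, le_inf hw0 hx, inf_le_right⟩,
      w - w ⊓ x, ⟨hsolid hwI (sub_nonneg.2 inf_le_left) (sub_le_self _ (le_inf hw0 hx)),
        sub_nonneg.2 inf_le_left, ?_⟩, add_sub_cancel _ _⟩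
    rw [sub_inf, sub_self]
    exact sup_le hy (sub_le_iff_le_add'.2 hwxy)
  · rintro ⟨a, ⟨haI, ha0, hax⟩, b, ⟨hbI, hb0, hby⟩, rfl⟩
    exact ⟨I.add_mem haI hbI, add_nonneg ha0 hb0, add_le_add hax hby⟩

end LatticeGroup

section BanachLattice

variable {E : Type*} [NormedAddCommGroup E] [Lattice E] [HasSolidNorm E] [IsOrderedAddMonoid E]
  [NormedSpace ℝ E]

lemma abs_apply_le_apply_abs (f : E →L[ℝ] ℝ) (hf : ∀ v : E, 0 ≤ v → 0 ≤ f v) (x : E) :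
    |f x| ≤ f |x| := by
  have h₁ := hf (|x| + x) (by simpa only [sub_neg_eq_add] using sub_nonneg.2 (neg_le_abs x))
  have h₂ := hf (|x| - x) (sub_nonneg.2 (le_abs_self x))
  rw [map_add] at h₁
  rw [map_sub] at h₂
  exact abs_le.2 ⟨by linarith, by linarith⟩

lemma exists_clm_eqOn_nonneg (p : E → ℝ) {C : ℝ} (hC : 0 ≤ C)
    (hadd : ∀ x y : E, 0 ≤ x → 0 ≤ y → p (x + y) = p x + p y)
    (hp0 : ∀ x : E, 0 ≤ x → 0 ≤ p x) (hpC : ∀ x : E, 0 ≤ x → p x ≤ C * ‖x‖) :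
    ∃ F : E →L[ℝ] ℝ, ∀ x : E, 0 ≤ x → F x = p x := by
  set P : E → ℝ := fun x => p x⁺ - p x⁻
  have hP : ∀ a b : E, 0 ≤ a → 0 ≤ b → P (a - b) = p a - p b := by
    intro a b ha hb
    have hsum : (a - b)⁺ + b = a + (a - b)⁻ := by
      rw [← sub_eq_sub_iff_add_eq_add, posPart_sub_negPart]
    have := congrArg p hsum
    rw [hadd _ _ (posPart_nonneg _) hb, hadd _ _ ha (negPart_nonneg _)] at this
    linarith
  have hPadd : ∀ x y : E, P (x + y) = P x + P y := by
    intro x y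
    have hxy : x + y = (x⁺ + y⁺) - (x⁻ + y⁻) := by
      conv_lhs => rw [← posPart_sub_negPart x, ← posPart_sub_negPart y]
      abel
    rw [hxy, hP _ _ (add_nonneg (posPart_nonneg x) (posPart_nonneg y))
      (add_nonneg (negPart_nonneg x) (negPart_nonneg y)),
      hadd _ _ (posPart_nonneg x) (posPart_nonneg y),
      hadd _ _ (negPart_nonneg x) (negPart_nonneg y)]
    ring
  have hPbound : ∀ x : E, ‖P x‖ ≤ C * ‖x‖ := by
    intro x
    have hpos : p x⁺ ≤ C * ‖x‖ := (hpC _ (posPart_nonneg x)).trans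
      (mul_le_mul_of_nonneg_left (norm_le_norm_of_abs_le_abs (by
        rw [abs_of_nonneg (posPart_nonneg x)]; exact sup_le (le_abs_self x) (abs_nonneg x))) hC)
    have hneg : p x⁻ ≤ C * ‖x‖ := (hpC _ (negPart_nonneg x)).trans
      (mul_le_mul_of_nonneg_left (norm_le_norm_of_abs_le_abs (by
        rw [abs_of_nonneg (negPart_nonneg x)]; exact sup_le (neg_le_abs x) (abs_nonneg x))) hC)
    rw [Real.norm_eq_abs, abs_sub_le_iff]
    constructor <;> linarith [hp0 _ (posPart_nonneg x), hp0 _ (negPart_nonneg x)]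
  let P' : E →+ ℝ := AddMonoidHom.mk' P hPadd
  refine ⟨P'.toRealLinearMap (AddMonoidHomClass.continuous_of_bound P' C hPbound), fun x hx => ?_⟩
  have hp_zero : p 0 = 0 := by simpa using hadd 0 0 le_rfl le_rfl
  simpa [P', hp_zero] using hP x 0 hx le_rfl

lemma exists_clm_isLUB_image_inter_Icc (f : E →L[ℝ] ℝ) {I : AddSubmonoid E}
    (hI : IsSolid (I : Set E)) :
    ∃ F : E →L[ℝ] ℝ, ∀ z : E, 0 ≤ z → IsLUB (f '' ((I : Set E) ∩ Set.Icc 0 z)) (F z) := by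
  set A : E → Set ℝ := fun z => f '' ((I : Set E) ∩ Set.Icc 0 z)
  have hzero : ∀ z : E, 0 ≤ z → (0 : ℝ) ∈ A z := fun z hz =>
    ⟨0, ⟨I.zero_mem, le_rfl, hz⟩, map_zero f⟩
  have hbound : ∀ z : E, ‖f‖ * ‖z‖ ∈ upperBounds (A z) := by
    rintro z _ ⟨w, ⟨-, hw0, hwz⟩, rfl⟩
    have hwz' : ‖w‖ ≤ ‖z‖ := norm_le_norm_of_abs_le_abs
      (by rw [abs_of_nonneg hw0, abs_of_nonneg (hw0.trans hwz)]; exact hwz)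
    exact (le_abs_self _).trans ((f.le_opNorm w).trans (by gcongr))
  have hlub : ∀ z : E, 0 ≤ z → IsLUB (A z) (sSup (A z)) := fun z hz =>
    isLUB_csSup ⟨0, hzero z hz⟩ ⟨_, hbound z⟩
  have hadd : ∀ x y : E, 0 ≤ x → 0 ≤ y → sSup (A (x + y)) = sSup (A x) + sSup (A y) := by
    intro x y hx hy
    refine (hlub _ (add_nonneg hx hy)).unique ?_
    simp only [A, inter_Icc_zero_add hI hx hy, Set.image_add]
    exact (hlub x hx).add (hlub y hy)
  obtain ⟨F, hF⟩ := exists_clm_eqOn_nonneg (fun z => sSup (A z)) (norm_nonneg f) hadd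
    (fun z hz => (hlub z hz).1 (hzero z hz)) (fun z hz => (hlub z hz).2 (hbound z))
  exact ⟨F, fun z hz => hF z hz ▸ hlub z hz⟩

lemma exists_clm_nonneg_ge (f : E →L[ℝ] ℝ) :
    ∃ g : E →L[ℝ] ℝ, (∀ x : E, 0 ≤ x → 0 ≤ g x) ∧ ∀ x : E, 0 ≤ x → f x ≤ g x := by
  obtain ⟨g, hg⟩ := exists_clm_isLUB_image_inter_Icc f (I := ⊤) fun _ _ _ _ => trivial
  exact ⟨g, fun x hx => (hg x hx).1 ⟨0, ⟨trivial, le_rfl, hx⟩, map_zero f⟩,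
    fun x hx => (hg x hx).1 ⟨x, ⟨trivial, hx, le_rfl⟩, rfl⟩⟩

lemma exists_clm_apply_eq_apply_posPart {ι : Type*} (f : E →L[ℝ] ℝ)
    (hf : ∀ v : E, 0 ≤ v → 0 ≤ f v) (x : ι → E) (hx : ∀ m n, (x m)⁺ ⊓ (x n)⁻ = 0) :
    ∃ F : E →L[ℝ] ℝ, ∀ n, F (x n) = f (x n)⁺ := by
  set I := disjointComplement (Set.range fun m => (x m)⁻)
  obtain ⟨F, hF⟩ := exists_clm_isLUB_image_inter_Icc f (isSolid_disjointComplement _)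
    (I := I.toAddSubmonoid)
  have hposI : ∀ n, (x n)⁺ ∈ I := by
    rintro n _ ⟨m, rfl⟩
    simpa [abs_of_nonneg (posPart_nonneg _), abs_of_nonneg (negPart_nonneg _)] using hx n m
  have hnegI : ∀ n, (I : Set E) ∩ Set.Icc 0 (x n)⁻ = {0} := by
    intro n
    refine Set.eq_singleton_iff_unique_mem.2 ⟨⟨I.zero_mem, le_rfl, negPart_nonneg _⟩, ?_⟩
    rintro w ⟨hwI, hw0, hwx⟩
    have := hwI _ ⟨n, rfl⟩
    rwa [abs_of_nonneg hw0, abs_of_nonneg (negPart_nonneg _), inf_eq_left.2 hwx] at this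
  have hmono : ∀ {a b : E}, a ≤ b → f a ≤ f b := fun {a b} hab => by
    simpa using hf _ (sub_nonneg.2 hab)
  refine ⟨F, fun n => ?_⟩
  have hpos : F (x n)⁺ = f (x n)⁺ := (hF _ (posPart_nonneg _)).unique <| IsGreatest.isLUB
    ⟨⟨_, ⟨hposI n, posPart_nonneg _, le_rfl⟩, rfl⟩,
      by rintro _ ⟨w, ⟨-, -, hw⟩, rfl⟩; exact hmono hw⟩
  have hneg : F (x n)⁻ = 0 := (hF _ (negPart_nonneg _)).unique (by simp [hnegI n])
  conv_lhs => rw [← posPart_sub_negPart (x n), map_sub, hpos, hneg, sub_zero]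

lemma exists_clm_apply_eq_apply_abs {ι : Type*} (f : E →L[ℝ] ℝ)
    (hf : ∀ v : E, 0 ≤ v → 0 ≤ f v) (x : ι → E) (hdisj : ∀ m n, m ≠ n → |x m| ⊓ |x n| = 0) :
    ∃ F : E →L[ℝ] ℝ, ∀ n, F (x n) = f |x n| := by
  have hx : ∀ m n, (x m)⁺ ⊓ (x n)⁻ = 0 := by
    intro m n
    rcases eq_or_ne m n with rfl | hmn
    · exact posPart_inf_negPart_eq_zero _
    · exact posPart_inf_negPart_eq_zero_of_abs_inf_abs (hdisj m n hmn)
  obtain ⟨F, hF⟩ := exists_clm_apply_eq_apply_posPart f hf x hx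
  obtain ⟨G, hG⟩ := exists_clm_apply_eq_apply_posPart f hf (fun n => -x n) fun m n => by
    simpa only [posPart_neg, negPart_neg, inf_comm] using hx n m
  refine ⟨F - G, fun n => ?_⟩
  have hGn := hG n
  simp only [map_neg, posPart_neg] at hGn
  rw [sub_apply, hF, ← posPart_add_negPart, map_add]
  linarith

lemma tendsto_apply_of_tendsto_apply_abs {ι : Type*} {l : Filter ι} (x : ι → E)
    (h : ∀ f : E →L[ℝ] ℝ, (∀ v : E, 0 ≤ v → 0 ≤ f v) → Tendsto (fun n => f |x n|) l (𝓝 0))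
    (f : E →L[ℝ] ℝ) : Tendsto (fun n => f (x n)) l (𝓝 0) := by
  have hpos : ∀ φ : E →L[ℝ] ℝ, (∀ v : E, 0 ≤ v → 0 ≤ φ v) → Tendsto (fun n => φ (x n)) l (𝓝 0) :=
    fun φ hφ => squeeze_zero_norm (fun n => abs_apply_le_apply_abs φ hφ (x n)) (h φ hφ)
  obtain ⟨g, hg0, hgf⟩ := exists_clm_nonneg_ge f
  have hdiff := (hpos g hg0).sub (hpos (g - f) fun v hv => sub_nonneg.2 (hgf v hv))
  simpa using hdiff

lemma tendsto_absWeakTopology_iff {ι : Type*} {l : Filter ι} (x : ι → E) :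
    Tendsto x l (@nhds E (absWeakTopology E) 0) ↔
      ∀ f : E →L[ℝ] ℝ, (∀ v : E, 0 ≤ v → 0 ≤ f v) → Tendsto (fun n => f |x n|) l (𝓝 0) := by
  rw [absWeakTopology, nhds_iInf, tendsto_iInf, Subtype.forall]
  refine forall₂_congr fun f hf => ?_
  have hdist : ∀ n, @dist E (absSeminormDist f hf).toDist (x n) 0 = f |x n| := fun n =>
    congrArg (f ∘ abs) (sub_zero (x n))
  simpa only [hdist] using @tendsto_iff_dist_tendsto_zero E ι (absSeminormDist f hf) x l 0

end BanachLattice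

theorem disjoint_absWeakNull_iff_weakNull_general {E : Type*} [NormedAddCommGroup E] [Lattice E] [HasSolidNorm E] [IsOrderedAddMonoid E] [NormedSpace ℝ E]
    (x : ℕ → E) (hdisj : ∀ m n, m ≠ n → |x m| ⊓ |x n| = 0) :
    Tendsto x atTop (@nhds E (absWeakTopology E) 0) ↔
      ∀ f : E →L[ℝ] ℝ, Tendsto (fun n => f (x n)) atTop (𝓝 0) := by
  rw [tendsto_absWeakTopology_iff]
  refine ⟨tendsto_apply_of_tendsto_apply_abs x, fun h f hf => ?_⟩
  obtain ⟨F, hF⟩ := exists_clm_apply_eq_apply_abs f hf x hdisj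
  simpa only [hF] using h F

/-- A pairwise disjoint sequence in a Banach lattice is absolutely weakly null iff it is
weakly null. -/
theorem disjoint_absWeakNull_iff_weakNull {E : Type*} [NormedAddCommGroup E] [Lattice E] [HasSolidNorm E] [IsOrderedAddMonoid E] [NormedSpace ℝ E] [PosSMulStrictMono ℝ E] [PosSMulReflectLT ℝ E] [CompleteSpace E]
    (x : ℕ → E) (hdisj : ∀ m n, m ≠ n → |x m| ⊓ |x n| = 0) :
    Tendsto x atTop (@nhds E (absWeakTopology E) 0) ↔
      ∀ f : E →L[ℝ] ℝ, Tendsto (fun n => f (x n)) atTop (𝓝 0) :=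
  disjoint_absWeakNull_iff_weakNull_general x hdisj
end

section
/- If the closed unit ball of the dual E* of a Banach lattice E is compact in the absolute weak* topology |σ|(E*,E), then the norm of E is order continuous. -/
set_option linter.unusedSectionVars false

open Filter Topology Pointwise MeasureTheory


section DualDefs

variable {E : Type*} [NormedAddCommGroup E] [Lattice E] [HasSolidNorm E] [IsOrderedAddMonoid E] [NormedSpace ℝ E]

/-- For a continuous linear functional `f` on a Banach lattice `E` and `z ∈ E`, the value
`|f|(z) = sup { f y : |y| ≤ z }` (meaningful for `z ≥ 0`), by the Riesz–Kantorovich formula. -/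
noncomputable def dualAbsVal (f : E →L[ℝ] ℝ) (z : E) : ℝ :=
  sSup ((fun y => f y) '' {y : E | |y| ≤ z})

lemma absBall_nonempty (x : E) : ({y : E | |y| ≤ |x|}).Nonempty := ⟨0, by simp⟩

lemma absBall_norm_le {x y : E} (hy : y ∈ {y : E | |y| ≤ |x|}) : ‖y‖ ≤ ‖x‖ := by
  have h : |y| ≤ |x| := hy
  simpa using norm_le_norm_of_abs_le_abs (by simpa using h)

/-- The pseudometric on the dual `E*` of a Banach lattice `E` induced by `x ∈ E`, given by
`dist f g = |f - g|(|x|) = sup { (f - g)(y) : |y| ≤ |x| }` (Riesz–Kantorovich formula). -/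
noncomputable def dualAbsDist (x : E) : PseudoMetricSpace (E →L[ℝ] ℝ) where
  dist f g := sSup ((fun y => f y - g y) '' {y : E | |y| ≤ |x|})
  dist_self f := by
    show sSup ((fun y => f y - f y) '' {y : E | |y| ≤ |x|}) = 0
    have h : ((fun y => f y - f y) '' {y : E | |y| ≤ |x|}) = {0} := by
      simp only [sub_self]
      exact Set.Nonempty.image_const (absBall_nonempty x) 0
    rw [h, csSup_singleton]
  dist_comm f g := by
    try dsimp only
    congr 1
    ext r
    constructor
    · rintro ⟨y, hy, rfl⟩
      exact ⟨-y, by simpa using hy, by show g (-y) - f (-y) = _; rw [map_neg, map_neg]; ring⟩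
    · rintro ⟨y, hy, rfl⟩
      exact ⟨-y, by simpa using hy, by show f (-y) - g (-y) = _; rw [map_neg, map_neg]; ring⟩
  dist_triangle f g h := by
    try dsimp only
    have hbdd : ∀ u v : E →L[ℝ] ℝ,
        BddAbove ((fun y => u y - v y) '' {y : E | |y| ≤ |x|}) := by
      intro u v
      refine ⟨‖u - v‖ * ‖x‖, ?_⟩
      rintro r ⟨y, hy, rfl⟩
      calc u y - v y ≤ |u y - v y| := le_abs_self _
        _ = ‖(u - v) y‖ := by rw [ContinuousLinearMap.sub_apply, Real.norm_eq_abs]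
        _ ≤ ‖u - v‖ * ‖y‖ := (u - v).le_opNorm y
        _ ≤ ‖u - v‖ * ‖x‖ := by
            have := absBall_norm_le (x := x) hy
            gcongr
    refine csSup_le ((absBall_nonempty x).image _) ?_
    rintro r ⟨y, hy, rfl⟩
    have h1 : f y - g y ≤ sSup ((fun y => f y - g y) '' {y : E | |y| ≤ |x|}) :=
      le_csSup (hbdd f g) ⟨y, hy, rfl⟩
    have h2 : g y - h y ≤ sSup ((fun y => g y - h y) '' {y : E | |y| ≤ |x|}) :=
      le_csSup (hbdd g h) ⟨y, hy, rfl⟩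
    show f y - h y ≤ _
    linarith

/-- The absolute weak* topology `|σ|(E*, E)` on the dual of a Banach lattice `E`: the topology
generated by the lattice seminorms `x* ↦ |x*|(|x|)`, `x ∈ E`. -/
noncomputable def absWeakStarTopology (E : Type*) [NormedAddCommGroup E] [Lattice E] [HasSolidNorm E] [IsOrderedAddMonoid E]
    [NormedSpace ℝ E] : TopologicalSpace (E →L[ℝ] ℝ) :=
  ⨅ x : E, (dualAbsDist x).toUniformSpace.toTopologicalSpace

end DualDefs

/-! If the partial sums of a positive series `∑ zₙ` stay below `u`, then `‖zₙ‖ → 0`. Otherwise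
take norming functionals `φₙ` of the `zₙ` with `‖zₙ‖ ≥ δ` and a `|σ|(E*, E)`-cluster point `ψ` of
them in the unit ball: since `ψ(zₙ) ≥ φₙ(zₙ) - |φₙ - ψ|(u)`, infinitely many `ψ(zₙ)` exceed `δ / 2`,
so some finite sum of them exceeds `‖u‖ ≥ ψ(∑_F zₙ)`. Applied to the successive drops of a
decreasing positive net, this makes the net norm-Cauchy, and its norm limit is its infimum `0`. -/

theorem Set.Infinite.exists_lt_finset_sum {α : Type*} {a : α → ℝ} {c : ℝ} (hc : 0 < c)
    (h : {n | c < a n}.Infinite) (M : ℝ) : ∃ F : Finset α, M < ∑ n ∈ F, a n := by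
  obtain ⟨K, hK⟩ := exists_nat_gt (M / c)
  obtain ⟨F, hFsub, hFcard⟩ := h.exists_subset_card_eq K
  refine ⟨F, ?_⟩
  calc M < K * c := (div_lt_iff₀ hc).1 hK
    _ = ∑ _n ∈ F, c := by simp [hFcard]
    _ ≤ ∑ n ∈ F, a n := Finset.sum_le_sum fun n hn => (hFsub hn).le

section AbsWeakStar

variable {E : Type*} [NormedAddCommGroup E] [Lattice E] [HasSolidNorm E] [IsOrderedAddMonoid E]
  [NormedSpace ℝ E]

theorem sub_apply_le_dualAbsDist {u y : E} (hy : |y| ≤ |u|) (f g : E →L[ℝ] ℝ) :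
    f y - g y ≤ (dualAbsDist u).dist f g := by
  refine le_csSup ⟨‖f - g‖ * ‖u‖, ?_⟩ ⟨y, hy, rfl⟩
  rintro _ ⟨x, hx, rfl⟩
  calc f x - g x ≤ ‖(f - g) x‖ := le_abs_self _
    _ ≤ ‖f - g‖ * ‖x‖ := (f - g).le_opNorm x
    _ ≤ ‖f - g‖ * ‖u‖ := by gcongr; exact absBall_norm_le hx

theorem exists_frequently_sub_apply_lt_of_isCompact_ball
    (hB : @IsCompact (E →L[ℝ] ℝ) (absWeakStarTopology E) {f : E →L[ℝ] ℝ | ‖f‖ ≤ 1})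
    {α : Type*} {l : Filter α} [l.NeBot] {φ : α → E →L[ℝ] ℝ} (hφ : ∀ a, ‖φ a‖ ≤ 1) :
    ∃ ψ : E →L[ℝ] ℝ, ‖ψ‖ ≤ 1 ∧
      ∀ (u : E) {ε : ℝ}, 0 < ε → ∃ᶠ a in l, ∀ y : E, |y| ≤ |u| → φ a y - ψ y < ε := by
  obtain ⟨ψ, hψ, hcluster⟩ :=
    hB (f := l.map φ) (le_principal_iff.2 (mem_map.2 (Eventually.of_forall hφ)))
  refine ⟨ψ, hψ, fun u ε hε => ?_⟩
  have hcluster_u : @MapClusterPt _ (dualAbsDist u).toUniformSpace.toTopologicalSpace _ ψ l φ :=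
    NeBot.mono hcluster (inf_le_inf_right _ (nhds_mono (iInf_le _ u)))
  exact (@MapClusterPt.frequently _ (dualAbsDist u).toUniformSpace.toTopologicalSpace _ _ _ _
    hcluster_u _ (@Metric.ball_mem_nhds _ (dualAbsDist u) ψ _ hε)).mono
      fun a ha y hy => (sub_apply_le_dualAbsDist hy _ _).trans_lt ha

theorem tendsto_norm_zero_of_sum_range_le
    (hB : @IsCompact (E →L[ℝ] ℝ) (absWeakStarTopology E) {f : E →L[ℝ] ℝ | ‖f‖ ≤ 1})
    {z : ℕ → E} {u : E} (hz : ∀ n, 0 ≤ z n) (hsum : ∀ N, ∑ n ∈ Finset.range N, z n ≤ u) :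
    Tendsto (fun n => ‖z n‖) atTop (𝓝 0) := by
  have hsumF : ∀ F : Finset ℕ, ∑ n ∈ F, z n ≤ u := fun F => by
    obtain ⟨N, hFN⟩ := F.exists_nat_subset_range
    exact (Finset.sum_le_sum_of_subset_of_nonneg hFN fun n _ _ => hz n).trans (hsum N)
  have habs : ∀ F : Finset ℕ, |∑ n ∈ F, z n| ≤ |u| := fun F => by
    have hF0 : 0 ≤ ∑ n ∈ F, z n := Finset.sum_nonneg fun n _ => hz n
    rw [abs_of_nonneg hF0, abs_of_nonneg (hF0.trans (hsumF F))]
    exact hsumF F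
  refine tendsto_order.2 ⟨fun a ha => .of_forall fun n => ha.trans_le (norm_nonneg _),
    fun δ hδ => ?_⟩
  by_contra hfreq
  simp only [not_eventually, not_lt] at hfreq
  have := frequently_iff_neBot.1 hfreq
  choose φ hφ hφz using fun n => exists_dual_vector'' ℝ (z n)
  obtain ⟨ψ, hψ, hclose⟩ := exists_frequently_sub_apply_lt_of_isCompact_ball hB
    (l := atTop ⊓ 𝓟 {n | δ ≤ ‖z n‖}) hφ
  have hlarge : ∃ᶠ n in atTop, δ / 2 < ψ (z n) := by
    refine ((hclose u (half_pos hδ)).and_eventually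
      (mem_inf_of_right (mem_principal_self _))).filter_mono inf_le_left |>.mono ?_
    rintro n ⟨hn, hδn : δ ≤ ‖z n‖⟩
    have := hn (z n) (by simpa using habs {n})
    rw [hφz n, RCLike.ofReal_real_eq_id, id] at this
    linarith
  obtain ⟨F, hF⟩ := (Nat.frequently_atTop_iff_infinite.1 hlarge).exists_lt_finset_sum
    (half_pos hδ) ‖u‖
  have hψF : ψ (∑ n ∈ F, z n) ≤ ‖u‖ :=
    calc ψ (∑ n ∈ F, z n) ≤ ‖ψ‖ * ‖∑ n ∈ F, z n‖ := (le_abs_self _).trans (ψ.le_opNorm _)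
      _ ≤ 1 * ‖u‖ := by gcongr; exact norm_le_norm_of_abs_le_abs (habs F)
      _ = ‖u‖ := one_mul _
  rw [map_sum] at hψF
  exact hF.not_ge hψF

theorem exists_forall_ge_norm_sub_lt_of_antitone
    (hB : @IsCompact (E →L[ℝ] ℝ) (absWeakStarTopology E) {f : E →L[ℝ] ℝ | ‖f‖ ≤ 1})
    {ι : Type*} [Preorder ι] [Nonempty ι] {d : ι → E} (hd : Antitone d) (h0 : ∀ i, 0 ≤ d i)
    {ε : ℝ} (hε : 0 < ε) : ∃ i, ∀ j, i ≤ j → ‖d i - d j‖ < ε := by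
  by_contra! hfar
  choose next hnext hdrop using hfar
  let α : ℕ → ι := fun n => next^[n] (Classical.arbitrary ι)
  have hα : ∀ n, α (n + 1) = next (α n) := fun n => Function.iterate_succ_apply' next n _
  have hdrops_vanish := tendsto_norm_zero_of_sum_range_le hB (u := d (α 0))
    (z := fun n => d (α n) - d (α (n + 1)))
    (fun n => sub_nonneg.2 (hd (hα n ▸ hnext _)))
    (fun N => by rw [Finset.sum_range_sub']; exact sub_le_self _ (h0 _))
  obtain ⟨n, hn⟩ := (hdrops_vanish.eventually (gt_mem_nhds hε)).exists
  exact (hdrop (α n)).not_gt (hα n ▸ hn)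

theorem cauchySeq_of_antitone_of_nonneg
    (hB : @IsCompact (E →L[ℝ] ℝ) (absWeakStarTopology E) {f : E →L[ℝ] ℝ | ‖f‖ ≤ 1})
    {ι : Type*} [Preorder ι] [Nonempty ι] [IsDirected ι (· ≤ ·)] {d : ι → E} (hd : Antitone d)
    (h0 : ∀ i, 0 ≤ d i) : CauchySeq d := by
  refine Metric.cauchy_iff.2 ⟨map_neBot, fun ε hε => ?_⟩
  obtain ⟨i, hi⟩ := exists_forall_ge_norm_sub_lt_of_antitone hB hd h0 (half_pos hε)
  refine ⟨d '' Set.Ici i, image_mem_map (Ici_mem_atTop i), ?_⟩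
  rintro _ ⟨j, hj, rfl⟩ _ ⟨k, hk, rfl⟩
  calc dist (d j) (d k) ≤ dist (d i) (d j) + dist (d i) (d k) := dist_triangle_left _ _ _
    _ < ε / 2 + ε / 2 := by
        rw [dist_eq_norm, dist_eq_norm]
        exact add_lt_add (hi j hj) (hi k hk)
    _ = ε := add_halves ε

end AbsWeakStar

theorem orderContinuous_of_absWeakStar_compact_ball_general {E : Type*} [NormedAddCommGroup E] [Lattice E] [HasSolidNorm E] [IsOrderedAddMonoid E] [NormedSpace ℝ E] [CompleteSpace E]
    (hB : @IsCompact (E →L[ℝ] ℝ) (absWeakStarTopology E) {f : E →L[ℝ] ℝ | ‖f‖ ≤ 1}) :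
    ∀ (ι : Type*) (_ : Preorder ι) (_ : Nonempty ι) (_ : IsDirected ι (· ≤ ·)) (d : ι → E),
      Antitone d → IsGLB (Set.range d) 0 → Tendsto (fun i => ‖d i‖) atTop (𝓝 0) := by
  intro ι _ _ _ d hd hglb
  obtain ⟨L, hL⟩ := cauchySeq_tendsto_of_complete
    (cauchySeq_of_antitone_of_nonneg hB hd fun i => hglb.1 ⟨i, rfl⟩)
  obtain rfl : L = 0 := (isGLB_of_tendsto_atTop hd hL).unique hglb
  simpa using hL.norm

/-- If the closed unit ball of the dual of a Banach lattice `E` is compact in the absolute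
weak* topology, then the norm of `E` is order continuous: every decreasing net with infimum `0`
converges to `0` in norm. -/
theorem orderContinuous_of_absWeakStar_compact_ball {E : Type*} [NormedAddCommGroup E] [Lattice E] [HasSolidNorm E] [IsOrderedAddMonoid E] [NormedSpace ℝ E] [PosSMulStrictMono ℝ E] [CompleteSpace E]
    (hB : @IsCompact (E →L[ℝ] ℝ) (absWeakStarTopology E) {f : E →L[ℝ] ℝ | ‖f‖ ≤ 1}) :
    ∀ (ι : Type*) (_ : Preorder ι) (_ : Nonempty ι) (_ : IsDirected ι (· ≤ ·)) (d : ι → E),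
      Antitone d → IsGLB (Set.range d) 0 → Tendsto (fun i => ‖d i‖) atTop (𝓝 0) :=
  orderContinuous_of_absWeakStar_compact_ball_general hB
end
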